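/- Let n be a positive integer, Q = 2n + 2, c = n!/(4(π/2)^{n+1}), and for t > 0 and g = (s,z) ∈ ℋ_n set S(t,g) = c/(|z|² + t − i s)^{n+1}. There is a constant C > 0 depending only on n such that for all t > 0, τ > 0 and γ > 0, ∫_{{g ∈ ℋ_n : ‖g‖ > γτ}} |S(t,g) − S(t+τ², g)| dg ≤ C γ^{−2}, the integral being with respect to Lebesgue measure on ℋ_n = ℝ × ℂ^n. -/

import Mathlib

open MeasureTheory

noncomputable section

/-- A point of the Heisenberg group ℋ_n : `(s, z) ∈ ℝ × ℂⁿ`. -/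
abbrev Heis (n : ℕ) := ℝ × (Fin n → ℂ)

/-- `|z|² = ∑ⱼ |zⱼ|²`. -/
def znormSq {n : ℕ} (z : Fin n → ℂ) : ℝ := ∑ j, Complex.normSq (z j)

/-- The homogeneous norm `‖(s,z)‖ = (|z|⁴ + s²)^{1/4}`. -/
def hnorm {n : ℕ} (g : Heis n) : ℝ := ((znormSq g.2) ^ 2 + g.1 ^ 2) ^ (1/4 : ℝ)

/-- The constant `c = n! / (4 (π/2)^{n+1})`. -/
def szegoConst (n : ℕ) : ℝ := (Nat.factorial n : ℝ) / (4 * (Real.pi / 2) ^ (n + 1))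

/-- The Cauchy–Szegő kernel `S(t,g) = c/(|z|² + t − i s)^{n+1}`. -/
def Szego (n : ℕ) (t : ℝ) (g : Heis n) : ℂ :=
  (szegoConst n : ℂ) / (((znormSq g.2 : ℝ) : ℂ) + (t : ℂ) - Complex.I * (g.1 : ℂ)) ^ (n + 1)

/-! For `t ≤ t'` the kernels differ by `c (w'^{-(n+1)} - w^{-(n+1)})` with `w' - w = t' - t`, and
`|w| ≥ ‖g‖²` on both, so `|S(t,g) - S(t+τ²,g)| ≲ τ² ‖g‖^{-(Q+2)}`. Since the homogeneous balls have
volume `r^Q |B₁|`, summing over the dyadic shells `γτ 2^k ≤ ‖g‖ < γτ 2^{k+1}` gives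
`∫_{‖g‖ > γτ} ‖g‖^{-(Q+2)} ≲ (γτ)^{-2}`, and the factor `τ²` cancels. -/

open scoped ENNReal

section NormedField

variable {𝕜 : Type*} [NormedField 𝕜]

theorem norm_pow_sub_pow_le {a b : 𝕜} (hba : ‖b‖ ≤ ‖a‖) (m : ℕ) :
    ‖a ^ m - b ^ m‖ ≤ m * ‖a‖ ^ (m - 1) * ‖a - b‖ := by
  rw [← geom_sum₂_mul, norm_mul]
  gcongr
  calc ‖∑ i ∈ Finset.range m, a ^ i * b ^ (m - 1 - i)‖ ≤ ∑ i ∈ Finset.range m, ‖a‖ ^ (m - 1) := by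
        refine norm_sum_le_of_le _ fun i hi => ?_
        calc ‖a ^ i * b ^ (m - 1 - i)‖ ≤ ‖a‖ ^ i * ‖a‖ ^ (m - 1 - i) := by
              rw [norm_mul, norm_pow, norm_pow]
              gcongr
          _ = ‖a‖ ^ (m - 1) := by rw [← pow_add, Nat.add_sub_cancel' (by grind)]
    _ = m * ‖a‖ ^ (m - 1) := by simp

theorem norm_inv_pow_sub_inv_pow_le {a b : 𝕜} (hb : b ≠ 0) (hba : ‖b‖ ≤ ‖a‖) (m : ℕ) :
    ‖(b ^ m)⁻¹ - (a ^ m)⁻¹‖ ≤ m * ‖a - b‖ / (‖b‖ ^ m * ‖a‖) := by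
  have hb' : 0 < ‖b‖ := norm_pos_iff.mpr hb
  have ha : a ≠ 0 := norm_pos_iff.mp (hb'.trans_le hba)
  rcases m with _ | m
  · simp
  rw [inv_sub_inv (pow_ne_zero _ hb) (pow_ne_zero _ ha), norm_div, norm_mul, norm_pow, norm_pow]
  calc ‖a ^ (m + 1) - b ^ (m + 1)‖ / (‖b‖ ^ (m + 1) * ‖a‖ ^ (m + 1))
      ≤ (m + 1 : ℕ) * ‖a‖ ^ m * ‖a - b‖ / (‖b‖ ^ (m + 1) * ‖a‖ ^ (m + 1)) := by
        gcongr
        exact norm_pow_sub_pow_le hba (m + 1)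
    _ = (m + 1 : ℕ) * ‖a - b‖ / (‖b‖ ^ (m + 1) * ‖a‖) := by
        have : ‖a‖ ≠ 0 := norm_ne_zero_iff.mpr ha
        field_simp
        ring

end NormedField

section Tail

variable {α : Type*} [MeasurableSpace α]

theorem lintegral_inv_pow_tail_le (μ : Measure α) (N : α → ℝ) {Q p : ℕ} (hp : 0 < p) (V : ℝ≥0∞)
    (hball : ∀ r, 0 < r → μ {x | N x ≤ r} ≤ ENNReal.ofReal (r ^ Q) * V) {R : ℝ} (hR : 0 < R) :
    ∫⁻ x in {x | R < N x}, ENNReal.ofReal (N x ^ (Q + p))⁻¹ ∂μ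
      ≤ ENNReal.ofReal (2 ^ (Q + 1) / R ^ p) * V := by
  set shell : ℕ → Set α := fun k => {x | R * 2 ^ k ≤ N x ∧ N x < R * 2 ^ (k + 1)}
  have hcover : {x | R < N x} ⊆ ⋃ k, shell k := by
    intro x hx
    obtain ⟨k, hk⟩ := exists_nat_pow_near ((one_le_div hR).mpr hx.le) one_lt_two
    simp only [le_div_iff₀ hR, div_lt_iff₀ hR, mul_comm _ R] at hk
    exact Set.mem_iUnion.mpr ⟨k, hk⟩
  have hshell : ∀ k, ∫⁻ x in shell k, ENNReal.ofReal (N x ^ (Q + p))⁻¹ ∂μ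
      ≤ ENNReal.ofReal (2 ^ Q / R ^ p) * 2⁻¹ ^ k * V := by
    intro k
    have hscale : ((R * 2 ^ k) ^ (Q + p))⁻¹ * (R * 2 ^ (k + 1)) ^ Q ≤ 2 ^ Q / R ^ p * 2⁻¹ ^ k := by
      have h2k : (2 : ℝ) ^ k ≤ (2 ^ k) ^ p := le_self_pow₀ (one_le_pow₀ one_le_two) hp.ne'
      calc ((R * 2 ^ k) ^ (Q + p))⁻¹ * (R * 2 ^ (k + 1)) ^ Q = 2 ^ Q / R ^ p / (2 ^ k) ^ p := by
            field_simp
            ring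
        _ ≤ 2 ^ Q / R ^ p / 2 ^ k := by gcongr
        _ = 2 ^ Q / R ^ p * 2⁻¹ ^ k := by rw [inv_pow, div_eq_mul_inv]
    calc ∫⁻ x in shell k, ENNReal.ofReal (N x ^ (Q + p))⁻¹ ∂μ
        ≤ ∫⁻ _ in shell k, ENNReal.ofReal ((R * 2 ^ k) ^ (Q + p))⁻¹ ∂μ := by
          refine setLIntegral_mono measurable_const fun x hx => ?_
          exact ENNReal.ofReal_le_ofReal (inv_anti₀ (by positivity) (by gcongr; exact hx.1))
      _ = ENNReal.ofReal ((R * 2 ^ k) ^ (Q + p))⁻¹ * μ (shell k) := setLIntegral_const _ _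
      _ ≤ ENNReal.ofReal ((R * 2 ^ k) ^ (Q + p))⁻¹
            * (ENNReal.ofReal ((R * 2 ^ (k + 1)) ^ Q) * V) := by
          gcongr
          exact (measure_mono fun x hx => hx.2.le).trans (hball _ (by positivity))
      _ ≤ ENNReal.ofReal (2 ^ Q / R ^ p * 2⁻¹ ^ k) * V := by
          rw [← mul_assoc, ← ENNReal.ofReal_mul (by positivity)]
          gcongr
      _ = ENNReal.ofReal (2 ^ Q / R ^ p) * 2⁻¹ ^ k * V := by
          rw [ENNReal.ofReal_mul (by positivity), ENNReal.ofReal_pow (by norm_num),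
            ENNReal.ofReal_inv_of_pos two_pos, ENNReal.ofReal_ofNat]
  calc ∫⁻ x in {x | R < N x}, ENNReal.ofReal (N x ^ (Q + p))⁻¹ ∂μ
      ≤ ∫⁻ x in ⋃ k, shell k, ENNReal.ofReal (N x ^ (Q + p))⁻¹ ∂μ := lintegral_mono_set hcover
    _ ≤ ∑' k, ∫⁻ x in shell k, ENNReal.ofReal (N x ^ (Q + p))⁻¹ ∂μ := lintegral_iUnion_le _ _
    _ ≤ ∑' k, ENNReal.ofReal (2 ^ Q / R ^ p) * 2⁻¹ ^ k * V := ENNReal.tsum_le_tsum hshell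
    _ = ENNReal.ofReal (2 ^ (Q + 1) / R ^ p) * V := by
        rw [ENNReal.tsum_mul_right, ENNReal.tsum_mul_left, ENNReal.tsum_geometric,
          ENNReal.one_sub_inv_two, inv_inv, ← ENNReal.ofReal_ofNat 2,
          ← ENNReal.ofReal_mul (by positivity)]
        congr 2
        ring

end Tail

section Heisenberg

variable {n : ℕ}

theorem znormSq_nonneg (z : Fin n → ℂ) : 0 ≤ znormSq z :=
  Finset.sum_nonneg fun _ _ => Complex.normSq_nonneg _

theorem hnorm_nonneg (g : Heis n) : 0 ≤ hnorm g :=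
  Real.rpow_nonneg (by positivity) _

theorem continuous_hnorm : Continuous (hnorm (n := n)) := by
  unfold hnorm znormSq
  exact Continuous.rpow_const (by fun_prop) fun _ => Or.inr (by norm_num)

theorem hnorm_pow_four (g : Heis n) : hnorm g ^ 4 = znormSq g.2 ^ 2 + g.1 ^ 2 := by
  rw [hnorm, ← Real.rpow_natCast, ← Real.rpow_mul (by positivity)]
  norm_num

theorem szegoConst_pos (n : ℕ) : 0 < szegoConst n := by
  unfold szegoConst
  positivity

def szegoBase (t : ℝ) (g : Heis n) : ℂ :=
  ((znormSq g.2 : ℝ) : ℂ) + (t : ℂ) - Complex.I * (g.1 : ℂ)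

theorem Szego_eq (t : ℝ) (g : Heis n) :
    Szego n t g = szegoConst n * (szegoBase t g ^ (n + 1))⁻¹ :=
  div_eq_mul_inv _ _

theorem norm_szegoBase (t : ℝ) (g : Heis n) :
    ‖szegoBase t g‖ = √((znormSq g.2 + t) ^ 2 + g.1 ^ 2) := by
  rw [Complex.norm_def, Complex.normSq_apply]
  congr 1
  simp [szegoBase]
  ring

theorem sq_hnorm_le_norm_szegoBase {t : ℝ} (ht : 0 ≤ t) (g : Heis n) :
    hnorm g ^ 2 ≤ ‖szegoBase t g‖ := by
  rw [norm_szegoBase, Real.le_sqrt (by positivity) (by positivity), ← pow_mul, hnorm_pow_four]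
  have := znormSq_nonneg g.2
  gcongr
  linarith

theorem norm_szegoBase_le_of_le {t t' : ℝ} (ht : 0 ≤ t) (htt' : t ≤ t') (g : Heis n) :
    ‖szegoBase t g‖ ≤ ‖szegoBase t' g‖ := by
  rw [norm_szegoBase, norm_szegoBase]
  have := znormSq_nonneg g.2
  gcongr

theorem szegoBase_ne_zero {t : ℝ} (ht : 0 < t) (g : Heis n) : szegoBase t g ≠ 0 := by
  refine fun h => (add_pos_of_nonneg_of_pos (znormSq_nonneg g.2) ht).ne' ?_
  simpa [szegoBase] using congrArg Complex.re h

theorem norm_szego_sub_le {t t' : ℝ} (ht : 0 < t) (htt' : t ≤ t') {g : Heis n}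
    (hg : 0 < hnorm g) :
    ‖Szego n t g - Szego n t' g‖ ≤ szegoConst n * (n + 1) * (t' - t) / hnorm g ^ (2 * n + 4) := by
  have hc := (szegoConst_pos n).le
  have hbase : ‖szegoBase t' g - szegoBase t g‖ = t' - t := by
    rw [show szegoBase t' g - szegoBase t g = ((t' - t : ℝ) : ℂ) by simp [szegoBase],
      Complex.norm_real, Real.norm_of_nonneg (by linarith)]
  have hden : hnorm g ^ (2 * n + 4) ≤ ‖szegoBase t g‖ ^ (n + 1) * ‖szegoBase t' g‖ := by
    rw [show 2 * n + 4 = 2 * (n + 1) + 2 by ring, pow_add, pow_mul]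
    gcongr
    exacts [sq_hnorm_le_norm_szegoBase ht.le g, sq_hnorm_le_norm_szegoBase (ht.le.trans htt') g]
  rw [Szego_eq, Szego_eq, ← mul_sub, norm_mul, Complex.norm_real, Real.norm_of_nonneg hc,
    mul_assoc, mul_div_assoc]
  gcongr
  calc _ ≤ (n + 1 : ℕ) * ‖szegoBase t' g - szegoBase t g‖
        / (‖szegoBase t g‖ ^ (n + 1) * ‖szegoBase t' g‖) :=
        norm_inv_pow_sub_inv_pow_le (szegoBase_ne_zero ht g)
          (norm_szegoBase_le_of_le ht.le htt' g) _
    _ ≤ (n + 1) * (t' - t) / hnorm g ^ (2 * n + 4) := by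
        rw [hbase]
        push_cast
        gcongr

end Heisenberg

section Dilation

variable {n : ℕ}

def dilate (r : ℝ) (g : Heis n) : Heis n := (r ^ 2 * g.1, r • g.2)

theorem znormSq_smul (r : ℝ) (z : Fin n → ℂ) : znormSq (r • z) = r ^ 2 * znormSq z := by
  simp only [znormSq, Finset.mul_sum, Pi.smul_apply, Complex.real_smul, Complex.normSq_mul,
    Complex.normSq_ofReal, sq]

theorem hnorm_dilate {r : ℝ} (hr : 0 ≤ r) (g : Heis n) : hnorm (dilate r g) = r * hnorm g := by
  rw [hnorm, dilate, znormSq_smul,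
    show (r ^ 2 * znormSq g.2) ^ 2 + (r ^ 2 * g.1) ^ 2 = r ^ 4 * (znormSq g.2 ^ 2 + g.1 ^ 2) by
      ring,
    Real.mul_rpow (by positivity) (by positivity), ← Real.rpow_natCast, ← Real.rpow_mul hr, hnorm]
  norm_num

theorem measurable_dilate (r : ℝ) : Measurable (dilate (n := n) r) :=
  (measurable_fst.const_mul _).prodMk (measurable_snd.const_smul r)

theorem map_dilate_volume {r : ℝ} (hr : 0 < r) :
    Measure.map (dilate r) (volume : Measure (Heis n))
      = ENNReal.ofReal (r ^ (2 * n + 2))⁻¹ • volume := by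
  have hdim : Module.finrank ℝ (Fin n → ℂ) = 2 * n := by
    rw [Module.finrank_pi_fintype]
    simp [mul_comm]
  rw [Measure.volume_eq_prod, show dilate r = Prod.map (r ^ 2 * ·) (r • ·) from rfl,
    ← Measure.map_prod_map _ _ (measurable_const_mul _) (measurable_const_smul r),
    Real.map_volume_mul_left (by positivity), Measure.map_addHaar_smul _ hr.ne', hdim,
    Measure.prod_smul_left, Measure.prod_smul_right, smul_smul,
    ← ENNReal.ofReal_mul (abs_nonneg _), abs_of_pos (by positivity), abs_of_pos (by positivity),
    ← mul_inv, ← pow_add, add_comm]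

theorem volume_hnorm_le {r : ℝ} (hr : 0 < r) :
    volume {g : Heis n | hnorm g ≤ r}
      = ENNReal.ofReal (r ^ (2 * n + 2)) * volume {g : Heis n | hnorm g ≤ 1} := by
  have hpre : dilate r ⁻¹' {g : Heis n | hnorm g ≤ r} = {g | hnorm g ≤ 1} := by
    ext g
    simp [hnorm_dilate hr.le, mul_le_iff_le_one_right hr]
  have hmap : Measure.map (dilate r) volume {g : Heis n | hnorm g ≤ r}
      = volume (dilate r ⁻¹' {g : Heis n | hnorm g ≤ r}) :=
    Measure.map_apply (measurable_dilate r)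
      (measurableSet_le continuous_hnorm.measurable measurable_const)
  rw [map_dilate_volume hr, hpre, Measure.smul_apply, smul_eq_mul] at hmap
  rw [← hmap, ← mul_assoc, ← ENNReal.ofReal_mul (by positivity), mul_inv_cancel₀ (by positivity),
    ENNReal.ofReal_one, one_mul]

theorem volume_hnorm_le_one_lt_top : volume {g : Heis n | hnorm g ≤ 1} < ⊤ := by
  refine Bornology.IsBounded.measure_lt_top
    ((Metric.isBounded_closedBall (x := 0) (r := 1)).subset ?_)
  intro g hg
  have h4 : znormSq g.2 ^ 2 + g.1 ^ 2 ≤ 1 := by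
    rw [← hnorm_pow_four]
    exact pow_le_one₀ (hnorm_nonneg g) hg
  have hz := znormSq_nonneg g.2
  rw [Metric.mem_closedBall, dist_zero_right, Prod.norm_def, max_le_iff,
    pi_norm_le_iff_of_nonneg zero_le_one, Real.norm_eq_abs, ← sq_le_one_iff_abs_le_one]
  refine ⟨by nlinarith, fun j => ?_⟩
  have hj : Complex.normSq (g.2 j) ≤ znormSq g.2 :=
    Finset.single_le_sum (fun i _ => Complex.normSq_nonneg (g.2 i)) (Finset.mem_univ j)
  rw [← sq_le_one_iff₀ (norm_nonneg _), Complex.sq_norm]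
  nlinarith

end Dilation

theorem lintegral_norm_szego_sub_le {n : ℕ} {t t' R : ℝ} (ht : 0 < t) (htt' : t ≤ t') (hR : 0 < R) :
    ∫⁻ g in {g : Heis n | R < hnorm g}, ENNReal.ofReal ‖Szego n t g - Szego n t' g‖
      ≤ ENNReal.ofReal (szegoConst n * (n + 1) * (t' - t) * 2 ^ (2 * n + 3) / R ^ 2)
          * volume {g : Heis n | hnorm g ≤ 1} := by
  have hK : 0 ≤ szegoConst n * (n + 1) * (t' - t) :=
    mul_nonneg (by have := szegoConst_pos n; positivity) (sub_nonneg.mpr htt')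
  calc ∫⁻ g in {g : Heis n | R < hnorm g}, ENNReal.ofReal ‖Szego n t g - Szego n t' g‖
      ≤ ∫⁻ g in {g : Heis n | R < hnorm g}, ENNReal.ofReal (szegoConst n * (n + 1) * (t' - t))
          * ENNReal.ofReal (hnorm g ^ (2 * n + 2 + 2))⁻¹ := by
        refine setLIntegral_mono
          ((continuous_hnorm.measurable.pow_const _).inv.ennreal_ofReal.const_mul _) fun g hg => ?_
        rw [← ENNReal.ofReal_mul hK, ← div_eq_mul_inv]
        exact ENNReal.ofReal_le_ofReal (norm_szego_sub_le ht htt' (hR.trans hg))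
    _ = ENNReal.ofReal (szegoConst n * (n + 1) * (t' - t))
          * ∫⁻ g in {g : Heis n | R < hnorm g}, ENNReal.ofReal (hnorm g ^ (2 * n + 2 + 2))⁻¹ :=
        lintegral_const_mul' _ _ ENNReal.ofReal_ne_top
    _ ≤ ENNReal.ofReal (szegoConst n * (n + 1) * (t' - t))
          * (ENNReal.ofReal (2 ^ (2 * n + 2 + 1) / R ^ 2) * volume {g : Heis n | hnorm g ≤ 1}) := by
        gcongr
        exact lintegral_inv_pow_tail_le volume hnorm two_pos _
          (fun r hr => (volume_hnorm_le hr).le) hR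
    _ = _ := by
        rw [← mul_assoc, ← ENNReal.ofReal_mul hK, mul_div_assoc]

theorem szego_kernel_difference_integral (n : ℕ) :
    ∃ C : ℝ, 0 < C ∧ ∀ t τ γ : ℝ, 0 < t → 0 < τ → 0 < γ →
      ∫⁻ g in {g : Heis n | γ * τ < hnorm g},
          ENNReal.ofReal ‖Szego n t g - Szego n (t + τ ^ 2) g‖
        ≤ ENNReal.ofReal (C / γ ^ 2) := by
  set V := volume {g : Heis n | hnorm g ≤ 1}
  have hV : V ≠ ⊤ := volume_hnorm_le_one_lt_top.ne
  have hc := szegoConst_pos n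
  set K := szegoConst n * (n + 1) * 2 ^ (2 * n + 3)
  refine ⟨K * V.toReal + 1, by positivity, fun t τ γ ht hτ hγ => ?_⟩
  calc ∫⁻ g in {g : Heis n | γ * τ < hnorm g}, ENNReal.ofReal ‖Szego n t g - Szego n (t + τ ^ 2) g‖
      ≤ ENNReal.ofReal (szegoConst n * (n + 1) * (t + τ ^ 2 - t) * 2 ^ (2 * n + 3) / (γ * τ) ^ 2)
          * V :=
        lintegral_norm_szego_sub_le ht (le_add_of_nonneg_right (sq_nonneg τ)) (mul_pos hγ hτ)
    _ = ENNReal.ofReal (K / γ ^ 2) * ENNReal.ofReal V.toReal := by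
        rw [ENNReal.ofReal_toReal hV]
        congr 2
        field_simp
        ring
    _ ≤ ENNReal.ofReal ((K * V.toReal + 1) / γ ^ 2) := by
        rw [← ENNReal.ofReal_mul (by positivity), div_mul_eq_mul_div]
        gcongr
        linarith
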